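/- arXiv:2603.15122 — 3 statements merged into one kernel-verified Lean document; each statement's English description precedes it below -/
import Mathlib

section
/- Let α ∈ (1,2) and g_k = (-1)^k · C(α,k). Then for every n ≥ 1, the partial sum ∑_{k=0}^{n} g_k is strictly negative. -/
noncomputable def genBinom (α : ℝ) (k : ℕ) : ℝ :=
  (∏ j ∈ Finset.range k, (α - j)) / (Nat.factorial k)

noncomputable def grunwald (α : ℝ) (k : ℕ) : ℝ := (-1 : ℝ) ^ k * genBinom α k

lemma prod_shift (α : ℝ) (n : ℕ) :
    ∏ j ∈ Finset.range (n + 1), (α - j) = α * ∏ j ∈ Finset.range n, ((α - 1) - j) := by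
  rw [Finset.prod_range_succ']
  simp only [Nat.cast_zero, sub_zero, Nat.cast_add, Nat.cast_one]
  rw [mul_comm]
  congr 1
  apply Finset.prod_congr rfl
  intro i _
  ring

lemma pascal (α : ℝ) (n : ℕ) :
    genBinom (α - 1) (n + 1) = genBinom α (n + 1) - genBinom (α - 1) n := by
  unfold genBinom
  rw [Finset.prod_range_succ, prod_shift α n]
  have h1 : (Nat.factorial (n + 1) : ℝ) = (n + 1) * Nat.factorial n := by
    rw [Nat.factorial_succ]; push_cast; ring
  have hf : (Nat.factorial n : ℝ) ≠ 0 := Nat.cast_ne_zero.2 (Nat.factorial_ne_zero n)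
  have h2 : (n : ℝ) + 1 ≠ 0 := by positivity
  rw [h1]
  field_simp
  ring

lemma sum_formula (α : ℝ) (n : ℕ) :
    ∑ k ∈ Finset.range (n + 1), grunwald α k = (-1) ^ n * genBinom (α - 1) n := by
  induction n with
  | zero => simp [grunwald, genBinom]
  | succ n ih =>
      rw [Finset.sum_range_succ, ih, pascal]
      unfold grunwald
      ring

lemma genBinom_succ (β : ℝ) (n : ℕ) :
    genBinom β (n + 1) = genBinom β n * ((β - n) / (n + 1)) := by
  unfold genBinom
  have h1 : (Nat.factorial (n + 1) : ℝ) = (n + 1) * Nat.factorial n := by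
    rw [Nat.factorial_succ]; push_cast; ring
  rw [Finset.prod_range_succ, h1, div_mul_div_comm]
  ring

theorem stmt4 (α : ℝ) (hα1 : 1 < α) (hα2 : α < 2) :
    ∀ n : ℕ, 1 ≤ n → ∑ k ∈ Finset.range (n + 1), grunwald α k < 0 := by
  intro n hn
  rw [sum_formula]
  induction n, hn using Nat.le_induction with
  | base =>
      have : genBinom (α - 1) 1 = α - 1 := by
        simp [genBinom]
      rw [this]
      simp
      linarith
  | succ n hn ih =>
      rw [genBinom_succ]
      have hpos : ((n : ℝ) - (α - 1)) / (n + 1) > 0 := by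
        have h1 : (1 : ℝ) ≤ n := by exact_mod_cast hn
        have : (0 : ℝ) < (n : ℝ) - (α - 1) := by linarith
        positivity
      have : (-1 : ℝ) ^ (n + 1) * (genBinom (α - 1) n * ((α - 1 - n) / (n + 1)))
          = ((-1) ^ n * genBinom (α - 1) n) * (((n : ℝ) - (α - 1)) / (n + 1)) := by
        rw [pow_succ]
        ring
      rw [this]
      exact mul_neg_of_neg_of_pos ih hpos
end

section
/- Let {A_n} be a sequence of d_n × d_n matrices with d_n → ∞. Suppose A_n = R_n + N_n where rank(R_n)/d_n → 0 and the spectral norm ‖N_n‖ → 0. Then for every continuous compactly supported F : ℝ → ℂ, (1/d_n) ∑_{i=1}^{d_n} F(σ_i(A_n)) → F(0), i.e., {A_n} is zero-distributed in the sense of singular values. -/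
noncomputable def singVals {n : ℕ} (A : Matrix (Fin n) (Fin n) ℂ) : Fin n → ℝ :=
  fun i => Real.sqrt ((Matrix.isHermitian_conjTranspose_mul_self A).eigenvalues i)

/-!
If `‖Z‖ < ε` and `A = R + Z`, then on the span `E` of the right singular vectors of `A` with
singular value `≥ ε` one has `‖A x‖ ≥ ε ‖x‖`, while on `ker R` one has `‖A x‖ = ‖Z x‖ < ε ‖x‖`.
So `E ∩ ker R = 0`, and at most `rank R` singular values of `A` are `≥ ε`. Hence, for every
`δ > 0`, the fraction of singular values of `A_n` that are `≥ δ` tends to zero; since `F` is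
bounded and continuous at `0`, the mean of `F` over the singular values tends to `F 0`.
-/

open Matrix Module Finset Filter Topology

lemma LinearMap.exists_mem_ne_zero_apply_eq_zero_of_finrank_range_lt {K V W : Type*}
    [DivisionRing K] [AddCommGroup V] [Module K V] [AddCommGroup W] [Module K W]
    [FiniteDimensional K V] (f : V →ₗ[K] W) {E : Submodule K V}
    (h : finrank K (LinearMap.range f) < finrank K E) : ∃ x ∈ E, x ≠ 0 ∧ f x = 0 := by
  obtain ⟨⟨x, hxE⟩, hx, hx0⟩ := Submodule.exists_mem_ne_zero_of_ne_bot
    (LinearMap.ker_ne_bot_of_finrank_lt (f := f.rangeRestrict ∘ₗ E.subtype) h)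
  exact ⟨x, hxE, by simpa using hx0, by simpa [Subtype.ext_iff] using hx⟩

lemma Matrix.rank_eq_finrank_range_toEuclideanLin {𝕜 m n : Type*} [RCLike 𝕜]
    [Fintype m] [Fintype n] [DecidableEq n] (A : Matrix m n 𝕜) :
    A.rank = finrank 𝕜 (LinearMap.range (toEuclideanLin A)) := by
  rw [rank_eq_finrank_range_toLin A (PiLp.basisFun 2 𝕜 m) (PiLp.basisFun 2 𝕜 n)]
  rfl

section Eigenbasis

variable {𝕜 ι m : Type*} [RCLike 𝕜] [Fintype ι] [DecidableEq ι] [Fintype m] [DecidableEq m]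

lemma Matrix.IsHermitian.repr_toEuclideanLin_apply {H : Matrix ι ι 𝕜} (hH : H.IsHermitian)
    (x : EuclideanSpace 𝕜 ι) (i : ι) :
    hH.eigenvectorBasis.repr (toEuclideanLin H x) i
      = hH.eigenvalues i * hH.eigenvectorBasis.repr x i := by
  have heig : toEuclideanLin H (hH.eigenvectorBasis i)
      = (hH.eigenvalues i : 𝕜) • hH.eigenvectorBasis i := by
    ext j
    simpa [toLpLin_apply, RCLike.real_smul_eq_coe_mul] using
      congrFun (hH.mulVec_eigenvectorBasis i) j
  rw [OrthonormalBasis.repr_apply_apply, OrthonormalBasis.repr_apply_apply,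
    ← isSymmetric_toEuclideanLin_iff.mpr hH, heig, inner_smul_left, RCLike.conj_ofReal]

lemma Matrix.norm_toEuclideanLin_sq (A : Matrix m ι 𝕜) (x : EuclideanSpace 𝕜 ι) :
    ‖toEuclideanLin A x‖ ^ 2 = ∑ i, (isHermitian_conjTranspose_mul_self A).eigenvalues i *
      ‖(isHermitian_conjTranspose_mul_self A).eigenvectorBasis.repr x i‖ ^ 2 := by
  set hH := isHermitian_conjTranspose_mul_self A
  have hquad : inner 𝕜 x (toEuclideanLin (Aᴴ * A) x) = ((‖toEuclideanLin A x‖ ^ 2 : ℝ) : 𝕜) := by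
    rw [toLpLin_mul_same, LinearMap.comp_apply, toEuclideanLin_conjTranspose_eq_adjoint,
      LinearMap.adjoint_inner_right, inner_self_eq_norm_sq_to_K]
    push_cast
    rfl
  rw [← RCLike.ofReal_inj (K := 𝕜), ← hquad, ← hH.eigenvectorBasis.repr.inner_map_map,
    PiLp.inner_apply]
  push_cast
  refine sum_congr rfl fun i _ => ?_
  rw [hH.repr_toEuclideanLin_apply, RCLike.inner_apply', ← RCLike.conj_mul]
  ring

lemma Matrix.mul_norm_sq_le_norm_toEuclideanLin_sq (A : Matrix m ι 𝕜) {c : ℝ}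
    {x : EuclideanSpace 𝕜 ι}
    (hx : ∀ i, (isHermitian_conjTranspose_mul_self A).eigenvectorBasis.repr x i ≠ 0 →
      c ≤ (isHermitian_conjTranspose_mul_self A).eigenvalues i) :
    c * ‖x‖ ^ 2 ≤ ‖toEuclideanLin A x‖ ^ 2 := by
  set hH := isHermitian_conjTranspose_mul_self A
  rw [norm_toEuclideanLin_sq, ← hH.eigenvectorBasis.repr.norm_map, EuclideanSpace.norm_sq_eq,
    mul_sum]
  refine sum_le_sum fun i _ => ?_
  by_cases hi : hH.eigenvectorBasis.repr x i = 0
  · simp [hi]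
  · exact mul_le_mul_of_nonneg_right (hx i hi) (by positivity)

end Eigenbasis

lemma card_le_singVals_le_rank {n : ℕ} (R Z : Matrix (Fin n) (Fin n) ℂ) {ε : ℝ}
    (hZ : ‖toEuclideanCLM (𝕜 := ℂ) Z‖ < ε) : #{i | ε ≤ singVals (R + Z) i} ≤ R.rank := by
  set hH := isHermitian_conjTranspose_mul_self (R + Z)
  set s : Finset (Fin n) := {i | ε ≤ singVals (R + Z) i}
  have hε : 0 < ε := (norm_nonneg _).trans_lt hZ
  by_contra! hlt
  have hE : finrank ℂ (Submodule.span ℂ (hH.eigenvectorBasis '' s)) = #s := by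
    have hli : LinearIndependent ℂ (fun i : (s : Set (Fin n)) => hH.eigenvectorBasis i) :=
      hH.eigenvectorBasis.orthonormal.linearIndependent.comp _ Subtype.val_injective
    rw [Set.image_eq_range, finrank_span_eq_card hli]
    simp
  obtain ⟨x, hxE, hx0, hRx⟩ :=
    (toEuclideanLin R).exists_mem_ne_zero_apply_eq_zero_of_finrank_range_lt
      (E := Submodule.span ℂ (hH.eigenvectorBasis '' s))
      (by rwa [← rank_eq_finrank_range_toEuclideanLin, hE])
  have hsupp : ∀ i, hH.eigenvectorBasis.repr x i ≠ 0 → ε ^ 2 ≤ hH.eigenvalues i := by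
    intro i hi
    rw [← hH.eigenvectorBasis.coe_toBasis, Basis.mem_span_image] at hxE
    have hi' : ε ≤ singVals (R + Z) i := by
      simpa [s] using hxE (by simpa [OrthonormalBasis.coe_toBasis_repr_apply] using hi)
    exact (Real.le_sqrt' hε).mp hi'
  have hlow := mul_norm_sq_le_norm_toEuclideanLin_sq (R + Z) hsupp
  have hup : ‖toEuclideanLin (R + Z) x‖ < ε * ‖x‖ := by
    rw [map_add, LinearMap.add_apply, hRx, zero_add, ← coe_toEuclideanCLM_eq_toEuclideanLin]
    exact ((toEuclideanCLM (𝕜 := ℂ) Z).le_opNorm x).trans_lt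
      (mul_lt_mul_of_pos_right hZ (norm_pos_iff.mpr hx0))
  nlinarith [norm_nonneg (toEuclideanLin (R + Z) x)]

lemma norm_sum_sub_le_of_norm_le {𝕜 ι : Type*} [RCLike 𝕜] [Fintype ι] (t : ι → ℝ) {F : ℝ → 𝕜}
    {M η δ : ℝ} (hFM : ∀ x, ‖F x‖ ≤ M) (hη : 0 ≤ η) (hFδ : ∀ x, |x| < δ → ‖F x - F 0‖ ≤ η) :
    ‖∑ i, (F (t i) - F 0)‖ ≤ Fintype.card ι * η + 2 * M * #{i | δ ≤ |t i|} := by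
  have hpt : ∀ i, ‖F (t i) - F 0‖ ≤ η + 2 * M * (if δ ≤ |t i| then 1 else 0) := by
    intro i
    split_ifs with hi
    · linarith [norm_sub_le (F (t i)) (F 0), hFM (t i), hFM 0]
    · simpa using hFδ (t i) (not_le.mp hi)
  calc ‖∑ i, (F (t i) - F 0)‖ ≤ ∑ i, (η + 2 * M * (if δ ≤ |t i| then 1 else 0)) :=
        (norm_sum_le _ _).trans (sum_le_sum fun i _ => hpt i)
    _ = Fintype.card ι * η + 2 * M * #{i | δ ≤ |t i|} := by
        rw [sum_add_distrib, ← mul_sum, natCast_card_filter]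
        simp

lemma tendsto_mean_comp_of_tendsto_card_div {𝕜 : Type*} [RCLike 𝕜] {d : ℕ → ℕ}
    (hd : ∀ᶠ n in atTop, d n ≠ 0) (t : (n : ℕ) → Fin (d n) → ℝ) {F : ℝ → 𝕜} {M : ℝ}
    (hFM : ∀ x, ‖F x‖ ≤ M) (hF0 : ContinuousAt F 0)
    (ht : ∀ δ > 0, Tendsto (fun n => (#{i | δ ≤ |t n i|} : ℝ) / d n) atTop (𝓝 0)) :
    Tendsto (fun n => (1 / (d n : 𝕜)) * ∑ i, F (t n i)) atTop (𝓝 (F 0)) := by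
  rw [Metric.tendsto_nhds]
  intro ε hε
  obtain ⟨δ, hδ, hFδ⟩ := Metric.continuousAt_iff.mp hF0 (ε / 2) (half_pos hε)
  have hsmall : ∀ᶠ n in atTop, 2 * M * ((#{i | δ ≤ |t n i|} : ℝ) / d n) < ε / 2 := by
    refine ((ht δ hδ).const_mul (2 * M)).eventually_lt_const ?_
    simpa using half_pos hε
  filter_upwards [hd, hsmall] with n hdn hn
  have hmean : (1 / (d n : 𝕜)) * ∑ i, F (t n i) - F 0
      = (1 / (d n : 𝕜)) * ∑ i, (F (t n i) - F 0) := by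
    rw [sum_sub_distrib, sum_const, card_univ, Fintype.card_fin, nsmul_eq_mul, mul_sub,
      ← mul_assoc, one_div_mul_cancel (Nat.cast_ne_zero.mpr hdn), one_mul]
  have hsum := norm_sum_sub_le_of_norm_le (t n) hFM (half_pos hε).le
    fun x hx => by simpa [dist_eq_norm] using (hFδ (by simpa [Real.dist_eq] using hx)).le
  rw [Fintype.card_fin] at hsum
  have hdpos : (0 : ℝ) < d n := by exact_mod_cast Nat.pos_of_ne_zero hdn
  rw [dist_eq_norm, hmean, norm_mul, norm_div, norm_one, RCLike.norm_natCast]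
  calc 1 / (d n : ℝ) * ‖∑ i, (F (t n i) - F 0)‖
      ≤ 1 / (d n : ℝ) * (d n * (ε / 2) + 2 * M * #{i | δ ≤ |t n i|}) := by gcongr
    _ = ε / 2 + 2 * M * ((#{i | δ ≤ |t n i|} : ℝ) / d n) := by field_simp
    _ < ε := by linarith

theorem stmt16 (d : ℕ → ℕ) (hd : Filter.Tendsto d Filter.atTop Filter.atTop)
    (A R Z : (n : ℕ) → Matrix (Fin (d n)) (Fin (d n)) ℂ)
    (hdecomp : ∀ n, A n = R n + Z n)
    (hrank : Filter.Tendsto (fun n => ((R n).rank : ℝ) / (d n : ℝ)) Filter.atTop (nhds 0))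
    (hnorm : Filter.Tendsto (fun n => ‖Matrix.toEuclideanCLM (𝕜 := ℂ) (Z n)‖)
      Filter.atTop (nhds 0))
    (F : ℝ → ℂ) (hF : Continuous F) (hFsupp : HasCompactSupport F) :
    Filter.Tendsto (fun n => (1 / (d n : ℂ)) * ∑ i, F (singVals (A n) i))
      Filter.atTop (nhds (F 0)) := by
  obtain ⟨M, hM⟩ := hFsupp.exists_bound_of_continuous hF
  refine tendsto_mean_comp_of_tendsto_card_div (hd.eventually_ne_atTop 0) _ hM hF.continuousAt
    fun δ hδ => ?_
  have hcount : ∀ᶠ n in atTop,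
      (#{i | δ ≤ |singVals (A n) i|} : ℝ) / d n ≤ (R n).rank / d n := by
    filter_upwards [hnorm.eventually_lt_const hδ] with n hn
    gcongr
    simpa [hdecomp, singVals, abs_of_nonneg (Real.sqrt_nonneg _)] using
      card_le_singVals_le_rank (R n) (Z n) hn
  exact squeeze_zero' (Eventually.of_forall fun n => by positivity) hcount hrank
end

section
/- Let {A_n} be a sequence of d_n × d_n matrices with d_n → ∞, and suppose there exists p ∈ [1,∞) such that ‖A_n‖_p / d_n^{1/p} → 0, where ‖·‖_p is the Schatten p-norm. Then {A_n} is zero-distributed in the sense of singular values: for every continuous compactly supported F : ℝ → ℂ, (1/d_n) ∑_{i=1}^{d_n} F(σ_i(A_n)) → F(0). -/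
noncomputable def schattenNorm {n : ℕ} (p : ℝ) (A : Matrix (Fin n) (Fin n) ℂ) : ℝ :=
  (∑ i, singVals A i ^ p) ^ (1 / p)

open Filter Topology Finset

section Averages

variable {E : Type*} [NormedAddCommGroup E]

lemma exists_norm_sub_le_add_mul_rpow {F : ℝ → E} {C : ℝ} (hC : ∀ x, ‖F x‖ ≤ C)
    (hF : ContinuousAt F 0) {p : ℝ} (hp : 0 < p) {η : ℝ} (hη : 0 < η) :
    ∃ K, ∀ x, 0 ≤ x → ‖F x - F 0‖ ≤ η + K * x ^ p := by
  obtain ⟨ε, hε, hεF⟩ := Metric.continuousAt_iff.mp hF η hη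
  have hεp : 0 < ε ^ p := Real.rpow_pos_of_pos hε p
  have hC0 : 0 ≤ C := (norm_nonneg _).trans (hC 0)
  refine ⟨2 * C / ε ^ p, fun x hx => ?_⟩
  have hxp : 0 ≤ x ^ p := Real.rpow_nonneg hx p
  rcases lt_or_ge x ε with hlt | hge
  · have hsmall : ‖F x - F 0‖ < η := by
      rw [← dist_eq_norm]
      exact hεF (by rwa [Real.dist_eq, sub_zero, abs_of_nonneg hx])
    have : 0 ≤ 2 * C / ε ^ p * x ^ p := by positivity
    linarith
  · have hbound : ‖F x - F 0‖ ≤ 2 * C := by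
      linarith [norm_sub_le (F x) (F 0), hC x, hC 0]
    have hpow : ε ^ p ≤ x ^ p := Real.rpow_le_rpow hε.le hge hp.le
    have hcharge : 2 * C ≤ 2 * C / ε ^ p * x ^ p := by
      rw [div_mul_eq_mul_div, le_div_iff₀ hεp]
      exact mul_le_mul_of_nonneg_left hpow (by positivity)
    linarith

lemma norm_average_sub_le [NormedSpace ℝ E] {ι : Type*} [Fintype ι] [Nonempty ι] {F : ℝ → E} {η K p : ℝ}
    (hFK : ∀ x, 0 ≤ x → ‖F x - F 0‖ ≤ η + K * x ^ p) {x : ι → ℝ} (hx : ∀ i, 0 ≤ x i) :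
    ‖(Fintype.card ι : ℝ)⁻¹ • ∑ i, F (x i) - F 0‖
      ≤ η + K * ((Fintype.card ι : ℝ)⁻¹ * ∑ i, x i ^ p) := by
  have hcard : (0 : ℝ) < Fintype.card ι := Nat.cast_pos.mpr Fintype.card_pos
  have hcenter : (Fintype.card ι : ℝ)⁻¹ • ∑ i, F (x i) - F 0
      = (Fintype.card ι : ℝ)⁻¹ • ∑ i, (F (x i) - F 0) := by
    rw [sum_sub_distrib, smul_sub, sum_const, card_univ, ← Nat.cast_smul_eq_nsmul ℝ,
      smul_smul, inv_mul_cancel₀ hcard.ne', one_smul]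
  rw [hcenter, norm_smul, Real.norm_of_nonneg (inv_nonneg.mpr hcard.le)]
  calc (Fintype.card ι : ℝ)⁻¹ * ‖∑ i, (F (x i) - F 0)‖
      ≤ (Fintype.card ι : ℝ)⁻¹ * ∑ i, (η + K * x i ^ p) := by
        gcongr
        exact (norm_sum_le _ _).trans (sum_le_sum fun i _ => hFK _ (hx i))
    _ = η + K * ((Fintype.card ι : ℝ)⁻¹ * ∑ i, x i ^ p) := by
        rw [sum_add_distrib, sum_const, card_univ, nsmul_eq_mul, ← mul_sum]
        field_simp

theorem tendsto_average_of_tendsto_average_rpow [NormedSpace ℝ E] {α : Type*} {l : Filter α} {ι : α → Type*}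
    [∀ a, Fintype (ι a)] (hne : ∀ᶠ a in l, Nonempty (ι a)) {x : ∀ a, ι a → ℝ}
    (hx : ∀ a i, 0 ≤ x a i) {p : ℝ} (hp : 0 < p)
    (hmoment : Tendsto (fun a => (Fintype.card (ι a) : ℝ)⁻¹ * ∑ i, x a i ^ p) l (𝓝 0))
    {F : ℝ → E} (hFb : ∃ C, ∀ y, ‖F y‖ ≤ C) (hF : ContinuousAt F 0) :
    Tendsto (fun a => (Fintype.card (ι a) : ℝ)⁻¹ • ∑ i, F (x a i)) l (𝓝 (F 0)) := by
  rw [Metric.tendsto_nhds]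
  intro η hη
  obtain ⟨C, hC⟩ := hFb
  obtain ⟨K, hK⟩ := exists_norm_sub_le_add_mul_rpow hC hF hp (half_pos hη)
  have hsmall : ∀ᶠ a in l, K * ((Fintype.card (ι a) : ℝ)⁻¹ * ∑ i, x a i ^ p) < η / 2 := by
    have := hmoment.const_mul K
    rw [mul_zero] at this
    exact this.eventually (gt_mem_nhds (half_pos hη))
  filter_upwards [hne, hsmall] with a _ ha
  rw [dist_eq_norm]
  linarith [norm_average_sub_le hK (hx a)]

end Averages

lemma singVals_nonneg {n : ℕ} (A : Matrix (Fin n) (Fin n) ℂ) (i : Fin n) : 0 ≤ singVals A i :=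
  Real.sqrt_nonneg _

lemma schattenNorm_div_rpow_rpow {n : ℕ} {p : ℝ} (hp : p ≠ 0) (A : Matrix (Fin n) (Fin n) ℂ) :
    (schattenNorm p A / (n : ℝ) ^ (1 / p)) ^ p = (n : ℝ)⁻¹ * ∑ i, singVals A i ^ p := by
  have hS : 0 ≤ ∑ i, singVals A i ^ p :=
    sum_nonneg fun i _ => Real.rpow_nonneg (singVals_nonneg A i) p
  rw [schattenNorm, ← Real.div_rpow hS (Nat.cast_nonneg _), ← Real.rpow_mul (by positivity),
    one_div_mul_cancel hp, Real.rpow_one, div_eq_inv_mul]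

theorem stmt17 (d : ℕ → ℕ) (hd : Filter.Tendsto d Filter.atTop Filter.atTop)
    (A : (n : ℕ) → Matrix (Fin (d n)) (Fin (d n)) ℂ)
    (p : ℝ) (hp : 1 ≤ p)
    (h : Filter.Tendsto (fun n => schattenNorm p (A n) / (d n : ℝ) ^ (1 / p))
      Filter.atTop (nhds 0))
    (F : ℝ → ℂ) (hF : Continuous F) (hFsupp : HasCompactSupport F) :
    Filter.Tendsto (fun n => (1 / (d n : ℂ)) * ∑ i, F (singVals (A n) i))
      Filter.atTop (nhds (F 0)) := by
  have hp0 : 0 < p := by linarith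
  have hmoment : Tendsto (fun n => (Fintype.card (Fin (d n)) : ℝ)⁻¹ * ∑ i, singVals (A n) i ^ p)
      atTop (𝓝 0) := by
    have := h.rpow_const (p := p) (Or.inr hp0.le)
    rw [Real.zero_rpow hp0.ne'] at this
    simpa only [schattenNorm_div_rpow_rpow hp0.ne', Fintype.card_fin] using this
  have hne : ∀ᶠ n in atTop, Nonempty (Fin (d n)) :=
    (hd.eventually_ge_atTop 1).mono fun n hn => Fin.pos_iff_nonempty.mp hn
  convert tendsto_average_of_tendsto_average_rpow hne (fun n => singVals_nonneg (A n)) hp0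
    hmoment (hFsupp.exists_bound_of_continuous hF) hF.continuousAt using 2 with n
  simp [Complex.real_smul, one_div]
end
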